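/- arXiv:2210.04041 — 6 statements merged into one kernel-verified Lean document; each statement's English description precedes it below -/
import Mathlib

section
/- Let X be an n×R random matrix whose entries are independent, with entry (j,r) distributed according to P_r on a finite alphabet 𝒳 ⊂ ℝ, and suppose ρ := max_{r} max_{x∈𝒳} P_r(x) < 1. Then Pr[rank(X) < R] ≤ Σ_{r=0}^{R-1} ρ^{n-r}; in particular Pr[rank(X) = R] → 1 as n → ∞. -/
/-!
If `rank X < R`, some column of `X` lies in the span of the columns before it. Fix `r` and condition
on all columns other than the `r`-th: the event becomes "column `r` lies in a fixed subspace `V` of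
dimension at most `r`". Such a `V` is the graph of a linear map on a set `S` of at most `r`
coordinates, so once the entries indexed by `S` are drawn, the remaining `n - |S| ≥ n - r` entries
are forced, each one with probability at most `ρ`. A union bound over `r` gives
`∑_{r<R} ρ^(n-r)`, which tends to `0` because `ρ < 1`.
-/

open Finset Function Module Submodule Filter Topology

section LinearAlgebra

variable {K : Type*} [Field K]

theorem Submodule.exists_finset_card_le_finrank_injOn_restrict {ι : Type*} [Finite ι]
    (V : Submodule K (ι → K)) :
    ∃ S : Finset ι, S.card ≤ finrank K V ∧ Set.InjOn S.restrict (V : Set (ι → K)) := by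
  classical
  let φ : ι → Dual K V := fun j => (LinearMap.proj j).comp V.subtype
  obtain ⟨b, -, -, hspan, hli⟩ :=
    exists_linearIndepOn_extension (linearIndepOn_empty K φ) (Set.empty_subset Set.univ)
  have : Fintype b := Fintype.ofFinite b
  refine ⟨b.toFinset, ?_, fun x hx y hy hxy => ?_⟩
  · simpa using hli.fintype_card_le_finrank
  · let w : V := ⟨x - y, sub_mem hx hy⟩
    -- every coordinate functional lies in the span of those indexed by `b`, which vanish at `w`
    have hvanish : span K (φ '' b) ≤ LinearMap.ker (Dual.eval K V w) := by
      rw [span_le]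
      rintro _ ⟨j, hj, rfl⟩
      simpa [w, φ, sub_eq_zero] using congrFun hxy ⟨j, by simpa using hj⟩
    funext j
    simpa [w, φ, sub_eq_zero] using hvanish (hspan ⟨j, trivial, rfl⟩)

theorem linearIndependent_of_forall_notMem_span_image_Iio {ι M : Type*} [LinearOrder ι]
    [Fintype ι] [AddCommGroup M] [Module K M] {v : ι → M}
    (h : ∀ i, v i ∉ span K (v '' Set.Iio i)) : LinearIndependent K v := by
  classical
  suffices ∀ s : Finset ι, LinearIndepOn K v s by
    simpa [linearIndepOn_univ_iff] using this univ
  intro s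
  induction s using Finset.induction_on_max with
  | empty => simp
  | insert a s has ih =>
    rw [coe_insert, linearIndepOn_insert fun ha => lt_irrefl a (has a ha)]
    exact ⟨ih, fun hmem => h a (span_mono (Set.image_mono fun x hx => has x hx) hmem)⟩

theorem Matrix.exists_col_mem_span_image_Iio_of_rank_lt {m n : Type*} [Fintype n] [LinearOrder n]
    (A : Matrix m n K) (h : A.rank < Fintype.card n) :
    ∃ i, A.col i ∈ span K (A.col '' Set.Iio i) := by
  by_contra! hA
  have hli := linearIndependent_of_forall_notMem_span_image_Iio hA
  rw [rank_eq_finrank_span_cols, ← Set.finrank,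
    ← linearIndependent_iff_card_eq_finrank_span.mp hli] at h
  exact h.false

theorem finrank_span_image_Iio_le {M : Type*} [AddCommGroup M] [Module K M] {R : ℕ}
    (v : Fin R → M) (r : Fin R) : finrank K (span K (v '' Set.Iio r)) ≤ r := by
  classical
  rw [← coe_Iio, ← coe_image]
  exact (finrank_span_finset_le_card _).trans (card_image_le.trans (Fin.card_Iio r).le)

end LinearAlgebra

theorem Finset.sum_filter_le_sum_sum_filter_of_exists {β γ : Type*} {s : Finset β}
    {I : Finset γ} {p : β → Prop} {q : γ → β → Prop} [DecidablePred p] [∀ i, DecidablePred (q i)]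
    {f : β → ℝ} (hf : ∀ x ∈ s, 0 ≤ f x) (h : ∀ x ∈ s, p x → ∃ i ∈ I, q i x) :
    ∑ x ∈ s.filter p, f x ≤ ∑ i ∈ I, ∑ x ∈ s.filter (q i), f x := by
  calc ∑ x ∈ s.filter p, f x
      ≤ ∑ x ∈ s.filter p, ∑ i ∈ I.filter (fun i => q i x), f x := by
        refine sum_le_sum fun x hx => ?_
        obtain ⟨hxs, hpx⟩ := mem_filter.mp hx
        obtain ⟨i, hi, hqi⟩ := h x hxs hpx
        exact single_le_sum (f := fun _ => f x) (fun _ _ => hf x hxs) (mem_filter.mpr ⟨hi, hqi⟩)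
    _ ≤ ∑ x ∈ s, ∑ i ∈ I.filter (fun i => q i x), f x :=
        sum_le_sum_of_subset_of_nonneg (filter_subset _ _) fun x hx _ =>
          sum_nonneg fun _ _ => hf x hx
    _ = ∑ i ∈ I, ∑ x ∈ s.filter (q i), f x := sum_comm' fun x i => by simp only [mem_filter]; tauto

section Weights

variable {ι α : Type*} [Fintype ι] [DecidableEq ι] [Fintype α]

theorem sum_pi_prod_eq_one {w : ι → α → ℝ} (hw : ∀ i, ∑ a, w i a = 1) :
    ∑ x : ι → α, ∏ i, w i (x i) = 1 := by
  rw [← Fintype.prod_sum]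
  simp [hw]

theorem sum_filter_prod_le_of_forall_update {w : ι → α → ℝ}
    (hw0 : ∀ i a, 0 ≤ w i a) (hw1 : ∀ i, ∑ a, w i a = 1) (E : (ι → α) → Prop) [DecidablePred E]
    (i : ι) {ε : ℝ} (h : ∀ x, ∑ a ∈ univ.filter (fun a => E (update x i a)), w i a ≤ ε) :
    ∑ x ∈ univ.filter E, ∏ k, w k (x k) ≤ ε := by
  obtain ⟨a₀⟩ : Nonempty α := by
    by_contra hα
    simpa [not_nonempty_iff.mp hα] using hw1 i
  let e := Equiv.funSplitAt i α
  let W : ({k // k ≠ i} → α) → ℝ := fun g => ∏ k : {k // k ≠ i}, w k (g k)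
  have hsplit : ∀ a g, ∏ k, w k (e.symm (a, g) k) = w i a * W g := by
    intro a g
    rw [Fintype.prod_eq_mul_prod_subtype_ne _ i]
    congr 1
    · simp [e]
    · exact prod_congr rfl fun k _ => by simp [e, k.2]
  have hupdate : ∀ a g, e.symm (a, g) = update (e.symm (a₀, g)) i a := by
    intro a g
    ext k
    by_cases hk : k = i <;> simp [e, hk]
  calc ∑ x ∈ univ.filter E, ∏ k, w k (x k)
      = ∑ g, W g * ∑ a ∈ univ.filter (fun a => E (e.symm (a, g))), w i a := by
        rw [sum_filter, ← e.symm.sum_comp, Fintype.sum_prod_type, sum_comm]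
        refine sum_congr rfl fun g _ => ?_
        rw [mul_sum, sum_filter]
        refine sum_congr rfl fun a _ => ?_
        split_ifs <;> simp [hsplit, mul_comm]
    _ ≤ ∑ g, W g * ε := by
        gcongr with g
        · exact prod_nonneg fun k _ => hw0 _ _
        · rw [filter_congr fun a _ => by rw [hupdate a g]]
          exact h (e.symm (a₀, g))
    _ = ε := by rw [← sum_mul, sum_pi_prod_eq_one fun k : {k // k ≠ i} => hw1 k, one_mul]

theorem sum_filter_mem_submodule_prod_le {K : Type*} [Field K] (𝒳 : Finset K) {Q : K → ℝ}
    (hQ0 : ∀ x ∈ 𝒳, 0 ≤ Q x) (hQ1 : ∑ x ∈ 𝒳, Q x = 1) {ρ : ℝ} (hρ0 : 0 ≤ ρ) (hρ1 : ρ ≤ 1)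
    (hQρ : ∀ x ∈ 𝒳, Q x ≤ ρ) (V : Submodule K (ι → K)) [DecidablePred (· ∈ V)] {r : ℕ}
    (hV : finrank K V ≤ r) :
    ∑ c ∈ univ.filter (fun c : ι → 𝒳 => (fun j => (c j : K)) ∈ V), ∏ j, Q (c j)
      ≤ ρ ^ (Fintype.card ι - r) := by
  classical
  obtain ⟨S, hS, hinj⟩ := V.exists_finset_card_le_finrank_injOn_restrict
  set F := univ.filter (fun c : ι → 𝒳 => (fun j => (c j : K)) ∈ V)
  have hcompl : ∀ c : ι → 𝒳, ∏ j ∈ Sᶜ, Q (c j) ≤ ρ ^ (Fintype.card ι - r) := fun c =>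
    calc ∏ j ∈ Sᶜ, Q (c j)
        ≤ ∏ _j ∈ Sᶜ, ρ := prod_le_prod (fun j _ => hQ0 _ (c j).2) fun j _ => hQρ _ (c j).2
      _ = ρ ^ (Fintype.card ι - S.card) := by rw [prod_const, card_compl]
      _ ≤ ρ ^ (Fintype.card ι - r) := pow_le_pow_of_le_one hρ0 hρ1 (by omega)
  have hrestrict : Set.InjOn (fun c : ι → 𝒳 => S.restrict c) F := by
    intro c hc c' hc' hcc'
    simp only [F, coe_filter, mem_univ, true_and, Set.mem_ofPred_eq] at hc hc'
    have := hinj hc hc' (funext fun j => congrArg Subtype.val (congrFun hcc' j))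
    exact funext fun j => Subtype.ext (congrFun this j)
  have hmarginal : ∑ c ∈ F, ∏ j ∈ S, Q (c j) ≤ 1 :=
    calc ∑ c ∈ F, ∏ j ∈ S, Q (c j)
        = ∑ t ∈ F.image (fun c => S.restrict c), ∏ j : S, Q (t j) := by
          rw [sum_image hrestrict]
          exact sum_congr rfl fun c _ => (prod_coe_sort S fun j => Q (c j)).symm
      _ ≤ ∑ t : S → 𝒳, ∏ j : S, Q (t j) :=
          sum_le_sum_of_subset_of_nonneg (subset_univ _) fun t _ _ =>
            prod_nonneg fun j _ => hQ0 _ (t j).2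
      _ = 1 := sum_pi_prod_eq_one fun _ => by rw [sum_coe_sort 𝒳 Q, hQ1]
  calc ∑ c ∈ F, ∏ j, Q (c j)
      = ∑ c ∈ F, (∏ j ∈ S, Q (c j)) * ∏ j ∈ Sᶜ, Q (c j) := by simp only [prod_mul_prod_compl]
    _ ≤ ∑ c ∈ F, (∏ j ∈ S, Q (c j)) * ρ ^ (Fintype.card ι - r) := by
        gcongr with c
        · exact prod_nonneg fun j _ => hQ0 _ (c j).2
        · exact hcompl c
    _ ≤ ρ ^ (Fintype.card ι - r) := by
        rw [← sum_mul]
        exact mul_le_of_le_one_left (pow_nonneg hρ0 _) hmarginal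


end Weights

section RandomMatrix

variable {K m : Type*} [Field K] [Fintype m] [DecidableEq m] {R : ℕ} (𝒳 : Finset K)
  {P : Fin R → K → ℝ} {ρ : ℝ}

open scoped Classical in
theorem sum_filter_col_mem_span_image_Iio_le (hP0 : ∀ r, ∀ x ∈ 𝒳, 0 ≤ P r x)
    (hP1 : ∀ r, ∑ x ∈ 𝒳, P r x = 1) (hρ0 : 0 ≤ ρ) (hρ1 : ρ ≤ 1) (hPρ : ∀ r, ∀ x ∈ 𝒳, P r x ≤ ρ)
    (r : Fin R) :
    ∑ M ∈ univ.filter (fun M : m → Fin R → 𝒳 =>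
        (Matrix.of fun j r => (M j r : K)).col r ∈
          span K ((Matrix.of fun j r => (M j r : K)).col '' Set.Iio r)),
      ∏ j, ∏ r, P r (M j r) ≤ ρ ^ (Fintype.card m - r) := by
  let E : (Fin R → m → 𝒳) → Prop := fun N =>
    (fun j => (N r j : K)) ∈ span K ((fun r' j => (N r' j : K)) '' Set.Iio r)
  have hE : ∀ N c, E (update N r c) ↔
      (fun j => (c j : K)) ∈ span K ((fun r' j => (N r' j : K)) '' Set.Iio r) := by
    intro N c
    have hearlier : (fun r' j => (update N r c r' j : K)) '' Set.Iio r =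
        (fun r' j => (N r' j : K)) '' Set.Iio r :=
      Set.image_congr fun r' (hr' : r' < r) => by rw [update_of_ne hr'.ne]
    simp only [E, update_self, hearlier]
  calc _ = ∑ N ∈ univ.filter E, ∏ r, ∏ j, P r (N r j) := by
        simp only [sum_filter]
        exact Fintype.sum_equiv (Equiv.piComm _) _ _ fun M => by rw [Finset.prod_comm]; rfl
    _ ≤ ρ ^ (Fintype.card m - r) := by
        refine sum_filter_prod_le_of_forall_update (w := fun r (c : m → 𝒳) => ∏ j, P r (c j))
          (fun r c => prod_nonneg fun j _ => hP0 r _ (c j).2)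
          (fun r => sum_pi_prod_eq_one fun _ => by rw [sum_coe_sort 𝒳 (P r), hP1]) E r
          fun N => ?_
        rw [filter_congr fun c _ => hE N c]
        exact sum_filter_mem_submodule_prod_le 𝒳 (hP0 r) (hP1 r) hρ0 hρ1 (hPρ r) _
          (finrank_span_image_Iio_le _ r)

theorem sum_filter_rank_lt_le (hP0 : ∀ r, ∀ x ∈ 𝒳, 0 ≤ P r x)
    (hP1 : ∀ r, ∑ x ∈ 𝒳, P r x = 1) (hρ0 : 0 ≤ ρ) (hρ1 : ρ ≤ 1) (hPρ : ∀ r, ∀ x ∈ 𝒳, P r x ≤ ρ) :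
    ∑ M ∈ univ.filter (fun M : m → Fin R → 𝒳 => (Matrix.of fun j r => (M j r : K)).rank < R),
      ∏ j, ∏ r, P r (M j r) ≤ ∑ r ∈ range R, ρ ^ (Fintype.card m - r) := by
  classical
  calc _ ≤ ∑ r, ∑ M ∈ univ.filter (fun M : m → Fin R → 𝒳 =>
          (Matrix.of fun j r => (M j r : K)).col r ∈
            span K ((Matrix.of fun j r => (M j r : K)).col '' Set.Iio r)),
        ∏ j, ∏ r, P r (M j r) :=
        sum_filter_le_sum_sum_filter_of_exists
          (fun M _ => prod_nonneg fun j _ => prod_nonneg fun r _ => hP0 r _ (M j r).2)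
          fun M _ hrank => by
            simpa using Matrix.exists_col_mem_span_image_Iio_of_rank_lt _ (by simpa using hrank)
    _ ≤ ∑ r : Fin R, ρ ^ (Fintype.card m - r) :=
        sum_le_sum fun r _ => sum_filter_col_mem_span_image_Iio_le 𝒳 hP0 hP1 hρ0 hρ1 hPρ r
    _ = ∑ r ∈ range R, ρ ^ (Fintype.card m - r) :=
        Fin.sum_univ_eq_sum_range (fun r => ρ ^ (Fintype.card m - r)) R

theorem sum_filter_rank_eq_add_sum_filter_rank_lt (hP1 : ∀ r, ∑ x ∈ 𝒳, P r x = 1) :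
    ∑ M ∈ univ.filter (fun M : m → Fin R → 𝒳 => (Matrix.of fun j r => (M j r : K)).rank = R),
      ∏ j, ∏ r, P r (M j r) +
    ∑ M ∈ univ.filter (fun M : m → Fin R → 𝒳 => (Matrix.of fun j r => (M j r : K)).rank < R),
      ∏ j, ∏ r, P r (M j r) = 1 := by
  have hlt : ∀ M : m → Fin R → 𝒳, (Matrix.of fun j r => (M j r : K)).rank < R ↔
      ¬(Matrix.of fun j r => (M j r : K)).rank = R := fun M => by
    have := (Matrix.rank_le_card_width (Matrix.of fun j r => (M j r : K))).trans_eq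
      (Fintype.card_fin R)
    omega
  rw [filter_congr fun M _ => hlt M, sum_filter_add_sum_filter_not]
  exact sum_pi_prod_eq_one (w := fun (_ : m) (g : Fin R → 𝒳) => ∏ r, P r (g r))
    fun _ => sum_pi_prod_eq_one fun r => by rw [sum_coe_sort 𝒳 (P r), hP1]

end RandomMatrix

theorem full_rank_whp_general (R : ℕ) (𝒳 : Finset ℝ) (P : Fin R → ℝ → ℝ)
    (hP0 : ∀ r x, 0 ≤ P r x)
    (hsum : ∀ r, ∑ x ∈ 𝒳, P r x = 1)
    (ρ : ℝ) (hρ0 : 0 ≤ ρ) (hρ1 : ρ < 1) (hρ : ∀ r, ∀ x ∈ 𝒳, P r x ≤ ρ) :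
    (∀ n : ℕ, R ≤ n →
      ∑ M : Fin n → Fin R → ↥𝒳, (∏ j, ∏ r, P r ((M j r : ℝ))) *
        (if (Matrix.of fun j r => ((M j r : ℝ))).rank < R then 1 else 0)
      ≤ ∑ r ∈ Finset.range R, ρ ^ (n - r)) ∧
    Filter.Tendsto (fun n : ℕ =>
      ∑ M : Fin n → Fin R → ↥𝒳, (∏ j, ∏ r, P r ((M j r : ℝ))) *
        (if (Matrix.of fun j r => ((M j r : ℝ))).rank = R then 1 else 0))
      Filter.atTop (nhds 1) := by
  have hrank_lt (n : ℕ) :=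
    sum_filter_rank_lt_le (m := Fin n) 𝒳 (fun r x _ => hP0 r x) hsum hρ0 hρ1.le hρ
  have hsplit (n : ℕ) := sum_filter_rank_eq_add_sum_filter_rank_lt (m := Fin n) 𝒳 hsum
  have hnonneg (n : ℕ) : 0 ≤ ∑ M ∈ univ.filter (fun M : Fin n → Fin R → 𝒳 =>
      (Matrix.of fun j r => (M j r : ℝ)).rank < R), ∏ j, ∏ r, P r (M j r) :=
    sum_nonneg fun M _ => prod_nonneg fun j _ => prod_nonneg fun r _ => hP0 _ _
  have htail : Tendsto (fun n : ℕ => ∑ r ∈ range R, ρ ^ (n - r)) atTop (𝓝 0) := by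
    simpa using tendsto_finsetSum (range R) fun r _ =>
      (tendsto_pow_atTop_nhds_zero_of_lt_one hρ0 hρ1).comp (tendsto_sub_atTop_nat r)
  simp only [Fintype.card_fin] at hrank_lt
  simp only [mul_ite, mul_one, mul_zero, ← sum_filter]
  refine ⟨fun n _ => hrank_lt n, ?_⟩
  refine tendsto_of_tendsto_of_tendsto_of_le_of_le (by simpa using tendsto_const_nhds.sub htail)
    tendsto_const_nhds (fun n => ?_) (fun n => ?_)
  · linarith [hrank_lt n, hsplit n]
  · linarith [hsplit n, hnonneg n]

/-- An n×R random matrix with independent entries, entry (j,r) ~ P_r on a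
finite alphabet 𝒳 ⊂ ℝ, with ρ = max_r max_{x∈𝒳} P_r x < 1, satisfies
Pr[rank X < R] ≤ Σ_{r=0}^{R-1} ρ^{n-r}, and Pr[rank X = R] → 1 as n → ∞. -/
theorem full_rank_whp (R : ℕ) (𝒳 : Finset ℝ) (P : Fin R → ℝ → ℝ)
    (hP0 : ∀ r x, 0 ≤ P r x) (hsupp : ∀ r x, x ∉ 𝒳 → P r x = 0)
    (hsum : ∀ r, ∑ x ∈ 𝒳, P r x = 1)
    (ρ : ℝ) (hρ0 : 0 ≤ ρ) (hρ1 : ρ < 1) (hρ : ∀ r, ∀ x ∈ 𝒳, P r x ≤ ρ) :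
    (∀ n : ℕ, R ≤ n →
      ∑ M : Fin n → Fin R → ↥𝒳, (∏ j, ∏ r, P r ((M j r : ℝ))) *
        (if (Matrix.of fun j r => ((M j r : ℝ))).rank < R then 1 else 0)
      ≤ ∑ r ∈ Finset.range R, ρ ^ (n - r)) ∧
    Filter.Tendsto (fun n : ℕ =>
      ∑ M : Fin n → Fin R → ↥𝒳, (∏ j, ∏ r, P r ((M j r : ℝ))) *
        (if (Matrix.of fun j r => ((M j r : ℝ))).rank = R then 1 else 0))
      Filter.atTop (nhds 1) :=
  full_rank_whp_general R 𝒳 P hP0 hsum ρ hρ0 hρ1 hρ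
end

section
/- Let V be a linear subspace of ℝ^n of dimension t ≤ r < n, and let v be a random vector in 𝒳^n (𝒳 ⊂ ℝ finite) with independent coordinates, each coordinate distribution bounded by ρ < 1 on every symbol. Then Pr[v ∈ V] ≤ ρ^{n-t} ≤ ρ^{n-r}. -/
open scoped Classical

lemma exists_determining_set (n t : ℕ) (V : Submodule ℝ (Fin n → ℝ))
    (hV : Module.finrank ℝ V = t) :
    ∃ S : Finset (Fin n), S.card ≤ t ∧
      ∀ v ∈ V, (∀ i ∈ S, v i = 0) → v = 0 := by
  classical
  set e : Fin n → Module.Dual ℝ V := fun i => (LinearMap.proj i).comp V.subtype with he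
  obtain ⟨b, hbsub, hbspan, hbind⟩ := exists_linearIndependent ℝ (Set.range e)
  have hfin : b.Finite := hbind.setFinite
  obtain ⟨B, hB⟩ : ∃ B : Finset (Module.Dual ℝ V), (B : Set (Module.Dual ℝ V)) = b :=
    ⟨hfin.toFinset, hfin.coe_toFinset⟩
  subst hB
  have hchoose : ∀ f ∈ B, ∃ i, e i = f := fun f hf => hbsub hf
  choose idx hidx using hchoose
  refine ⟨B.attach.image (fun f => idx f.1 f.2), ?_, ?_⟩
  · calc (B.attach.image (fun f => idx f.1 f.2)).card
        ≤ B.attach.card := Finset.card_image_le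
      _ = B.card := Finset.card_attach
      _ ≤ Module.finrank ℝ (Module.Dual ℝ V) :=
          LinearIndependent.finset_card_le_finrank hbind
      _ = t := by rw [Subspace.dual_finrank_eq, hV]
  · intro v hv hvS
    set x : V := ⟨v, hv⟩ with hx
    have hker : Submodule.span ℝ (B : Set (Module.Dual ℝ V)) ≤ LinearMap.ker (Module.Dual.eval ℝ V x) := by
      rw [Submodule.span_le]
      intro f hf
      have hf' : f ∈ B := hf
      have h1 : e (idx f hf') = f := hidx f hf'
      have h2 : v (idx f hf') = 0 :=
        hvS _ (Finset.mem_image.mpr ⟨⟨f, hf'⟩, Finset.mem_attach _ _, rfl⟩)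
      show f ∈ LinearMap.ker (Module.Dual.eval ℝ V x)
      rw [LinearMap.mem_ker, Module.Dual.eval_apply, ← h1]
      simpa [he] using h2
    have hall : ∀ j, v j = 0 := by
      intro j
      have : e j ∈ Submodule.span ℝ (B : Set (Module.Dual ℝ V)) := by
        rw [hbspan]
        exact Submodule.subset_span ⟨j, rfl⟩
      have := hker this
      simpa [he] using this
    funext j
    exact hall j

/-- If V ⊆ ℝ^n is a subspace of dimension t ≤ r < n and v is a random
vector in 𝒳^n with independent coordinates, each coordinate distribution bounded by
ρ < 1 on every symbol, then Pr[v ∈ V] ≤ ρ^(n−t) ≤ ρ^(n−r). -/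
theorem prob_in_subspace (n t r : ℕ) (htr : t ≤ r) (hrn : r < n)
    (𝒳 : Finset ℝ) (P : Fin n → ℝ → ℝ)
    (hP0 : ∀ i x, 0 ≤ P i x) (hsupp : ∀ i x, x ∉ 𝒳 → P i x = 0)
    (hsum : ∀ i, ∑ x ∈ 𝒳, P i x = 1)
    (ρ : ℝ) (hρ0 : 0 ≤ ρ) (hρ1 : ρ < 1) (hρ : ∀ i, ∀ x ∈ 𝒳, P i x ≤ ρ)
    (V : Submodule ℝ (Fin n → ℝ)) (hV : Module.finrank ℝ V = t) :
    (∑ v : Fin n → ↥𝒳, (∏ i, P i ((v i : ℝ))) *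
      (if (fun i => ((v i : ℝ))) ∈ V then 1 else 0)) ≤ ρ ^ (n - t) ∧
    ρ ^ (n - t) ≤ ρ ^ (n - r) := by
  classical
  constructor
  · obtain ⟨S, hScard, hSdet⟩ := exists_determining_set n t V hV
    set F : Finset (Fin n → ↥𝒳) :=
      Finset.univ.filter (fun v => (fun i => ((v i : ℝ))) ∈ V) with hF
    have step1 : (∑ v : Fin n → ↥𝒳, (∏ i, P i ((v i : ℝ))) *
        (if (fun i => ((v i : ℝ))) ∈ V then 1 else 0)) =
        ∑ v ∈ F, ∏ i, P i ((v i : ℝ)) := by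
      rw [hF, Finset.sum_filter]
      exact Finset.sum_congr rfl (fun v _ => by split <;> simp
        )
    rw [step1]
    -- bound each term
    have hcompl : n - t ≤ Sᶜ.card := by
      rw [Finset.card_compl, Fintype.card_fin]
      omega
    have step2 : ∀ v ∈ F, (∏ i, P i ((v i : ℝ))) ≤
        ρ ^ (n - t) * ∏ i ∈ S, P i ((v i : ℝ)) := by
      intro v _
      rw [← Finset.prod_mul_prod_compl S (fun i => P i ((v i : ℝ))), mul_comm]
      apply mul_le_mul_of_nonneg_right _ (Finset.prod_nonneg (fun i _ => hP0 _ _))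
      calc (∏ i ∈ Sᶜ, P i ((v i : ℝ))) ≤ ∏ _i ∈ Sᶜ, ρ :=
            Finset.prod_le_prod (fun i _ => hP0 _ _) (fun i _ => hρ i _ (v i).2)
        _ = ρ ^ (Sᶜ.card) := Finset.prod_const ρ
        _ ≤ ρ ^ (n - t) := pow_le_pow_of_le_one hρ0 hρ1.le hcompl
    calc (∑ v ∈ F, ∏ i, P i ((v i : ℝ)))
        ≤ ∑ v ∈ F, ρ ^ (n - t) * ∏ i ∈ S, P i ((v i : ℝ)) :=
          Finset.sum_le_sum step2
      _ = ρ ^ (n - t) * ∑ v ∈ F, ∏ i ∈ S, P i ((v i : ℝ)) := by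
          rw [Finset.mul_sum]
      _ ≤ ρ ^ (n - t) * 1 := by
          apply mul_le_mul_of_nonneg_left _ (pow_nonneg hρ0 _)
          -- project onto S-coordinates
          set φ : (Fin n → ↥𝒳) → ({ i // i ∈ S } → ↥𝒳) := fun v j => v j.1 with hφ
          have hinj : Set.InjOn φ F := by
            intro v hv w hw hvw
            have hvV : (fun i => ((v i : ℝ))) ∈ V := (Finset.mem_filter.mp hv).2
            have hwV : (fun i => ((w i : ℝ))) ∈ V := (Finset.mem_filter.mp hw).2
            have hsub : ((fun i => ((v i : ℝ))) - fun i => ((w i : ℝ))) ∈ V :=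
              sub_mem hvV hwV
            have hzero : ∀ i ∈ S, ((fun i => ((v i : ℝ))) - fun i => ((w i : ℝ))) i = 0 := by
              intro i hi
              have : v i = w i := congrFun hvw ⟨i, hi⟩
              simp [this]
            have := hSdet _ hsub hzero
            funext i
            have h0 := congrFun this i
            simp only [Pi.sub_apply, Pi.zero_apply, sub_eq_zero] at h0
            exact Subtype.ext h0
          have himg : ∑ v ∈ F, ∏ i ∈ S, P i ((v i : ℝ)) =
              ∑ w ∈ F.image φ, ∏ j : { i // i ∈ S }, P j.1 ((w j : ℝ)) := by
            rw [Finset.sum_image (fun x hx y hy h => hinj hx hy h)]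
            refine Finset.sum_congr rfl (fun v _ => ?_)
            rw [← Finset.prod_attach S (fun i => P i ((v i : ℝ)))]
            rfl
          rw [himg]
          calc (∑ w ∈ F.image φ, ∏ j : { i // i ∈ S }, P j.1 ((w j : ℝ)))
              ≤ ∑ w : { i // i ∈ S } → ↥𝒳, ∏ j : { i // i ∈ S }, P j.1 ((w j : ℝ)) :=
                Finset.sum_le_sum_of_subset_of_nonneg (Finset.subset_univ _)
                  (fun w _ _ => Finset.prod_nonneg (fun j _ => hP0 _ _))
            _ = ∏ j : { i // i ∈ S }, ∑ x : ↥𝒳, P j.1 (x : ℝ) := by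
                rw [Finset.prod_univ_sum]
                rw [Fintype.piFinset_univ]
            _ = 1 := by
                rw [Finset.prod_eq_one]
                intro j _
                rw [← hsum j.1]
                exact Finset.sum_coe_sort 𝒳 (fun x => P j.1 x)
      _ = ρ ^ (n - t) := mul_one _
  · exact pow_le_pow_of_le_one hρ0 hρ1.le (Nat.sub_le_sub_left htr n)
end

section
/- Let N ≥ 2 and let X_1, …, X_N ∈ ℝ^{n×R} all have full column rank R. Then the order-N tensor T = Σ_{r=1}^R a_{r1} ∘ ⋯ ∘ a_{rN} (where a_{ri} is the r-th column of X_i) has tensor rank exactly R: it cannot be written as a sum of fewer than R rank-one (outer product) tensors. -/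
/-!
Contract every mode of `T` except the first two against vectors `w_i`, chosen (an infinite field
is not a finite union of hyperplanes) so that every column of `X_i` has nonzero inner product with
`w_i`. For any decomposition `∑ s, b_{s1} ∘ ⋯ ∘ b_{sN}` the resulting matrix is `B₁ D B₂ᵀ` with `D`
diagonal, so its rank is at most the number of terms. For the given decomposition `D` is invertible
and `X_1`, `X_2` have independent columns, so the rank is `R`.
-/

open Matrix Function

theorem exists_forall_dotProduct_ne_zero {K σ κ : Type*} [Field K] [Infinite K] [Finite σ]
    [Fintype κ] (v : σ → κ → K) (hv : ∀ r, v r ≠ 0) : ∃ w : κ → K, ∀ r, v r ⬝ᵥ w ≠ 0 := by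
  refine Module.Dual.exists_forall_ne_zero_of_forall_exists
    (fun r => dotProductBilin K K (v r)) fun r => ?_
  by_contra! h
  exact hv r (dotProduct_eq_zero (v r) fun u => by simpa [dotProduct_comm] using h u)

namespace Matrix

variable {K m n r : Type*} [Field K] [Fintype n] [Fintype r]

theorem linearIndependent_col_of_rank_eq_card {A : Matrix m n K} (hA : A.rank = Fintype.card n) :
    LinearIndependent K A.col := by
  rw [linearIndependent_iff_card_eq_finrank_span, Set.finrank, ← rank_eq_finrank_span_cols, hA]

theorem rank_mul_eq_right_of_injective_mulVec {A : Matrix m n K} (hA : Injective A.mulVec)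
    (B : Matrix n r K) : (A * B).rank = B.rank := by
  rw [rank, rank, mulVecLin_mul, LinearMap.range_comp]
  exact (Submodule.equivMapOfInjective A.mulVecLin hA _).finrank_eq.symm

theorem rank_mul_diagonal_mul_transpose [Fintype m] [DecidableEq r] {A : Matrix m r K}
    {B : Matrix n r K} (hA : LinearIndependent K A.col) (hB : LinearIndependent K B.col) {d : r → K}
    (hd : ∀ i, d i ≠ 0) : (A * diagonal d * Bᵀ).rank = Fintype.card r := by
  rw [← mulVec_injective_iff] at hA hB
  have hD : IsUnit (diagonal d) := isUnit_diagonal.mpr (Pi.isUnit_iff.mpr fun i => (hd i).isUnit)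
  rw [Matrix.mul_assoc, rank_mul_eq_right_of_injective_mulVec hA, ← rank_transpose,
    transpose_mul, transpose_transpose, rank_mul_eq_right_of_injective_mulVec hB, rank_transpose,
    rank_of_isUnit _ hD]

end Matrix

section Contraction

variable {K ι κ σ : Type*} [CommRing K] [Fintype ι] [DecidableEq ι] [Fintype κ]

theorem sum_mul_prod_eq_prod_dotProduct (b : ι → κ → K) (g : ι → κ → K) :
    ∑ t : ι → κ, (∏ m, b m (t m)) * ∏ m, g m (t m) = ∏ m, b m ⬝ᵥ g m := by
  simp_rw [← Finset.prod_mul_distrib, dotProduct, Fintype.prod_sum]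

variable [DecidableEq κ]

/-- Contracting modes `i` and `j` against the basis vectors `e_u`, `e_v` leaves the `(u, v)` entry
of the slice of `T` obtained by contracting every other mode `m` against `w m`. -/
def contractAllBut (T : (ι → κ) → K) (i j : ι) (w : ι → κ → K) : Matrix κ κ K :=
  Matrix.of fun u v =>
    ∑ t, T t * ∏ m, update (update w i (Pi.single u 1)) j (Pi.single v 1) m (t m)

def factorMatrix (b : σ → ι → κ → K) (i : ι) : Matrix κ σ K :=
  Matrix.of fun u s => b s i u

theorem contractAllBut_sum_prod [Fintype σ] [DecidableEq σ] (b : σ → ι → κ → K) {i j : ι}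
    (hij : i ≠ j) (w : ι → κ → K) :
    contractAllBut (fun t => ∑ s, ∏ m, b s m (t m)) i j w =
      factorMatrix b i *
        diagonal (fun s => ∏ m ∈ (Finset.univ.erase i).erase j, b s m ⬝ᵥ w m) *
          (factorMatrix b j)ᵀ := by
  ext u v
  rw [mul_apply]
  simp only [contractAllBut, factorMatrix, mul_diagonal, of_apply, transpose_apply, Finset.sum_mul]
  rw [Finset.sum_comm]
  refine Finset.sum_congr rfl fun s _ => ?_
  rw [sum_mul_prod_eq_prod_dotProduct, ← Finset.mul_prod_erase _ _ (Finset.mem_univ i),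
    ← Finset.mul_prod_erase _ _ (Finset.mem_erase.mpr ⟨hij.symm, Finset.mem_univ j⟩)]
  have hrest : ∀ m ∈ (Finset.univ.erase i).erase j,
      update (update w i (Pi.single u 1)) j (Pi.single v 1) m = w m := fun m hm => by
    obtain ⟨hmj, hmi, -⟩ := Finset.mem_erase.mp hm |>.imp_right Finset.mem_erase.mp
    rw [update_of_ne hmj, update_of_ne hmi]
  rw [Finset.prod_congr rfl fun m hm => congrArg (b s m ⬝ᵥ ·) (hrest m hm), update_self,
    update_of_ne hij, update_self, dotProduct_single, dotProduct_single]
  ring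

theorem rank_contractAllBut_sum_prod_le [StrongRankCondition K] [Fintype σ] [DecidableEq σ]
    (b : σ → ι → κ → K) {i j : ι} (hij : i ≠ j) (w : ι → κ → K) :
    (contractAllBut (fun t => ∑ s, ∏ m, b s m (t m)) i j w).rank ≤ Fintype.card σ := by
  rw [contractAllBut_sum_prod b hij w]
  exact (rank_mul_le_left _ _).trans ((rank_mul_le_left _ _).trans (rank_le_card_width _))

end Contraction

theorem tensor_rank_of_full_rank_factors_general (N n R : ℕ) (hN : 2 ≤ N)
    (X : Fin N → Matrix (Fin n) (Fin R) ℝ) (hX : ∀ i, (X i).rank = R) :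
    IsLeast {R' : ℕ | ∃ a : Fin R' → (i : Fin N) → Fin n → ℝ,
      (fun t : Fin N → Fin n => ∑ r : Fin R, ∏ i, X i (t i) r)
        = fun t => ∑ r', ∏ i, a r' i (t i)} R := by
  refine ⟨⟨fun r i x => X i x r, rfl⟩, ?_⟩
  rintro R' ⟨a, ha⟩
  have hcol (i : Fin N) : LinearIndependent ℝ (X i).col :=
    linearIndependent_col_of_rank_eq_card (by rw [hX i, Fintype.card_fin])
  choose w hw using fun i => exists_forall_dotProduct_ne_zero (X i).col (hcol i).ne_zero
  have hij : (⟨0, by omega⟩ : Fin N) ≠ ⟨1, by omega⟩ := by simp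
  calc R = (contractAllBut (fun t => ∑ r, ∏ i, X i (t i) r) _ _ w).rank := by
        rw [contractAllBut_sum_prod (fun r i x => X i x r) hij w]
        exact (Fintype.card_fin R).symm.trans (rank_mul_diagonal_mul_transpose (hcol _) (hcol _)
          fun r => Finset.prod_ne_zero_iff.mpr fun i _ => hw i r).symm
    _ = (contractAllBut (fun t => ∑ r', ∏ i, a r' i (t i)) _ _ w).rank := by rw [ha]
    _ ≤ R' := (rank_contractAllBut_sum_prod_le a hij w).trans_eq (Fintype.card_fin R')

/-- if X_1,…,X_N ∈ ℝ^{n×R} all have full column rank R (N ≥ 2), then the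
tensor T = Σ_{r=1}^R a_{r1}∘⋯∘a_{rN} (a_{ri} the r-th column of X_i) has tensor rank
exactly R: R is the least R' such that T is a sum of R' outer products. -/
theorem tensor_rank_of_full_rank_factors (N n R : ℕ) (hN : 2 ≤ N) (hnR : R ≤ n)
    (X : Fin N → Matrix (Fin n) (Fin R) ℝ) (hX : ∀ i, (X i).rank = R) :
    IsLeast {R' : ℕ | ∃ a : Fin R' → (i : Fin N) → Fin n → ℝ,
      (fun t : Fin N → Fin n => ∑ r : Fin R, ∏ i, X i (t i) r)
        = fun t => ∑ r', ∏ i, a r' i (t i)} R :=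
  tensor_rank_of_full_rank_factors_general N n R hN X hX
end

section
/- Fix a finite alphabet 𝒳 ⊂ ℝ, n ≥ R ≥ 2. The number of pairs of full-column-rank matrices (X_1, X_2) ∈ 𝒳^{n×R} × 𝒳^{n×R} with X_1 X_2^T = T, for any fixed matrix T, is at most a constant Γ depending only on |𝒳| and R (not on n). -/
/-!
Fix one solution `(X₁, X₂)` of `X₁ X₂ᵀ = T`. For every solution `(P₁, P₂)` the column space of
`P₁` is that of `T`, hence that of `X₁`. Since `X₁` has full column rank, some `R` of its rows
form an invertible matrix, and a vector of the column space of `X₁` is determined by its entries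
on these rows. So `P₁` is determined by its `R × R` submatrix on these rows, and `P₂` is then
determined by `P₁ P₂ᵀ = T` because `P₁` is injective. This injects the solutions into
`𝒳^{R × R}`.
-/

open Matrix

namespace Matrix

variable {K m m' r ι : Type*} [Field K] [Fintype r]

theorem mulVec_injective_of_rank_eq {A : Matrix m r K} (hA : A.rank = Fintype.card r) :
    Function.Injective A.mulVec :=
  mulVec_injective_iff.2 <| linearIndependent_iff_card_eq_finrank_span.2 <| by
    rw [Set.finrank, ← rank_eq_finrank_span_cols, hA]

theorem mul_left_cancel_of_rank_eq {n : Type*} [Fintype n] {A : Matrix m r K}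
    (hA : A.rank = Fintype.card r) {B C : Matrix r n K} (h : A * B = A * C) : B = C := by
  classical
  refine ext_of_mulVec_single fun j => mulVec_injective_of_rank_eq hA ?_
  rw [mulVec_mulVec, mulVec_mulVec, h]

theorem range_mulVecLin_mul_transpose [Fintype m'] (P : Matrix m r K) {Q : Matrix m' r K}
    (hQ : Q.rank = Fintype.card r) :
    LinearMap.range (P * Qᵀ).mulVecLin = LinearMap.range P.mulVecLin := by
  have hQ_top : LinearMap.range Qᵀ.mulVecLin = ⊤ :=
    Submodule.eq_top_of_finrank_eq <| by
      rw [← rank, rank_transpose, hQ, Module.finrank_fintype_fun_eq_card]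
  rw [mulVecLin_mul, LinearMap.range_comp, hQ_top, Submodule.map_top]

theorem exists_isUnit_submatrix_of_rank_eq [Finite m] [DecidableEq r] {A : Matrix m r K}
    (hA : A.rank = Fintype.card r) : ∃ ρ : r → m, IsUnit (A.submatrix ρ id) := by
  obtain ⟨κ, a, -, hspan, hind⟩ := exists_linearIndependent' K A.row
  have hspan_top : Submodule.span K (Set.range (A.row ∘ a)) = ⊤ := by
    refine hspan.trans (Submodule.eq_top_of_finrank_eq ?_)
    rw [← rank_eq_finrank_span_row, hA, Module.finrank_fintype_fun_eq_card]
  let b := Module.Basis.mk hind hspan_top.ge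
  have : Fintype κ := b.fintypeIndexOfRankLtAleph0 (Module.rank_lt_aleph0 K _)
  have hcard : Fintype.card r = Fintype.card κ := by
    rw [← Module.finrank_fintype_fun_eq_card (R := K), Module.finrank_eq_card_basis b]
  let e := Fintype.equivOfCardEq hcard
  exact ⟨a ∘ e, linearIndependent_rows_iff_isUnit.1 (hind.comp e e.injective)⟩

theorem injOn_comp_range_mulVecLin [DecidableEq r] {A : Matrix m r K} {ρ : r → m}
    (hρ : IsUnit (A.submatrix ρ id)) :
    Set.InjOn (fun v => v ∘ ρ) (LinearMap.range A.mulVecLin : Set (m → K)) := by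
  rintro _ ⟨w, rfl⟩ _ ⟨w', rfl⟩ h
  exact congrArg (A *ᵥ ·) (mulVec_injective_iff_isUnit.2 hρ h)

theorem eq_of_mul_transpose_eq_of_submatrix_eq [Fintype m'] {T : Matrix m m' K} {ρ : ι → m}
    (hρ : Set.InjOn (fun v => v ∘ ρ) (LinearMap.range T.mulVecLin : Set (m → K)))
    {P₁ Q₁ : Matrix m r K} {P₂ Q₂ : Matrix m' r K} (hP₁ : P₁.rank = Fintype.card r)
    (hP₂ : P₂.rank = Fintype.card r) (hQ₂ : Q₂.rank = Fintype.card r)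
    (hP : P₁ * P₂ᵀ = T) (hQ : Q₁ * Q₂ᵀ = T) (h : P₁.submatrix ρ id = Q₁.submatrix ρ id) :
    P₁ = Q₁ ∧ P₂ = Q₂ := by
  classical
  have hP₁Q₁ : P₁ = Q₁ := by
    refine ext_of_mulVec_single fun j => hρ ?_ ?_ (congrArg (· *ᵥ Pi.single j 1) h)
    · rw [← hP, range_mulVecLin_mul_transpose _ hP₂]
      exact LinearMap.mem_range_self _ _
    · rw [← hQ, range_mulVecLin_mul_transpose _ hQ₂]
      exact LinearMap.mem_range_self _ _
  refine ⟨hP₁Q₁, transpose_injective (mul_left_cancel_of_rank_eq hP₁ ?_)⟩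
  rw [hP, hP₁Q₁, hQ]

end Matrix

theorem pair_count_bounded_general (𝒳 : Finset ℝ) (R : ℕ) :
    ∃ Γ : ℕ, ∀ n : ℕ, R ≤ n → ∀ T : Matrix (Fin n) (Fin n) ℝ,
      Nat.card {p : (Fin n → Fin R → ↥𝒳) × (Fin n → Fin R → ↥𝒳) //
        (Matrix.of fun i r => ((p.1 i r : ℝ))).rank = R ∧
        (Matrix.of fun i r => ((p.2 i r : ℝ))).rank = R ∧
        (Matrix.of fun i r => ((p.1 i r : ℝ))) * (Matrix.of fun i r => ((p.2 i r : ℝ)))ᵀ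
          = T} ≤ Γ := by
  refine ⟨Fintype.card (Fin R → Fin R → 𝒳), fun n _ T => ?_⟩
  have hcard : Fintype.card (Fin R) = R := Fintype.card_fin R
  by_contra! hlt
  obtain ⟨⟨⟨X₁, X₂⟩, hX₁, hX₂, hX⟩⟩ := (Nat.card_pos_iff.1 (Nat.zero_lt_of_lt hlt)).1
  obtain ⟨ρ, hρ⟩ := exists_isUnit_submatrix_of_rank_eq (hX₁.trans hcard.symm)
  have hρT := injOn_comp_range_mulVecLin hρ
  rw [← range_mulVecLin_mul_transpose _ (hX₂.trans hcard.symm), hX] at hρT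
  refine hlt.not_ge ((Nat.card_le_card_of_injective (fun p a => p.1.1 (ρ a)) ?_).trans
    Nat.card_eq_fintype_card.le)
  intro ⟨⟨P₁, P₂⟩, hP₁, hP₂, hP⟩ ⟨⟨Q₁, Q₂⟩, _, hQ₂, hQ⟩ hPQ
  obtain ⟨h₁, h₂⟩ := eq_of_mul_transpose_eq_of_submatrix_eq hρT (hP₁.trans hcard.symm)
    (hP₂.trans hcard.symm) (hQ₂.trans hcard.symm) hP hQ
    (congrArg (fun X : Fin R → Fin R → 𝒳 => (of X).map Subtype.val) hPQ)
  exact Subtype.ext (Prod.ext (map_injective Subtype.val_injective h₁)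
    (map_injective Subtype.val_injective h₂))

/-- for a finite alphabet 𝒳 ⊂ ℝ and R ≥ 2, the number of pairs of
full-column-rank matrices (X₁, X₂) with entries in 𝒳 and X₁X₂ᵀ = T is bounded by a
constant Γ independent of n (and of T). -/
theorem pair_count_bounded (𝒳 : Finset ℝ) (R : ℕ) (hR : 2 ≤ R) :
    ∃ Γ : ℕ, ∀ n : ℕ, R ≤ n → ∀ T : Matrix (Fin n) (Fin n) ℝ,
      Nat.card {p : (Fin n → Fin R → ↥𝒳) × (Fin n → Fin R → ↥𝒳) //
        (Matrix.of fun i r => ((p.1 i r : ℝ))).rank = R ∧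
        (Matrix.of fun i r => ((p.2 i r : ℝ))).rank = R ∧
        (Matrix.of fun i r => ((p.1 i r : ℝ))) * (Matrix.of fun i r => ((p.2 i r : ℝ)))ᵀ
          = T} ≤ Γ :=
  pair_count_bounded_general 𝒳 R
end

section
/- Let 𝒳 = {−1,1} and a, b ∈ 𝒳^n with a_n + b_n = 2 (i.e., a_n = b_n = 1) and a_i + b_i = 0 for all i ∈ [1:n−1]. Then the tensor T with T_{ijk} = a_i a_j a_k + b_i b_j b_k determines the pair (a,b) up to exactly one binary choice: there are exactly 2 pairs (a,b) producing T. -/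
/-!
Since every entry is `±1`, the diagonal entries `T_{iii} = x_i + y_i` of a decomposition
`T = x⊗x⊗x + y⊗y⊗y` recover `x + y = a + b`. With `l` the last index this forces
`x_l = y_l = 1` and `y_i = -x_i` for `i ≠ l`, so the entries `T_{ijl} = 2 x_i x_j` recover
all products `x_i x_j = a_i a_j` off `l`. Hence `x_i = ε a_i` off `l` for the single sign
`ε = x_{i₀} a_{i₀}`, and the two choices of `ε` give `(a, b)` and `(b, a)`.
-/

theorem Nat.card_subtype_eq_two {α : Type*} {P : α → Prop} {u v : α} (huv : u ≠ v)
    (hP : ∀ p, P p ↔ p = u ∨ p = v) : Nat.card {p // P p} = 2 := by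
  rw [Nat.card_congr (Equiv.subtypeEquivRight hP)]
  exact (Nat.card_coe_set_eq {u, v}).trans (Set.ncard_pair huv)

section SignVectors

variable {ι : Type*} {a b x y : ι → ℝ}

theorem add_eq_add_of_tensor_eq (hx : ∀ i, x i * x i = 1) (hy : ∀ i, y i * y i = 1)
    (ha : ∀ i, a i * a i = 1) (hb : ∀ i, b i * b i = 1)
    (hT : ∀ i j k, x i * x j * x k + y i * y j * y k = a i * a j * a k + b i * b j * b k)
    (i : ι) : x i + y i = a i + b i := by
  linear_combination hT i i i - x i * hx i - y i * hy i + a i * ha i + b i * hb i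

theorem eq_one_and_eq_one_of_add_eq_two {s t : ℝ} (hs : s * s = 1) (ht : t * t = 1)
    (h : s + t = 2) : s = 1 ∧ t = 1 := by
  rcases mul_self_eq_one_iff.mp hs with rfl | rfl <;>
    rcases mul_self_eq_one_iff.mp ht with rfl | rfl <;>
    first | exact ⟨rfl, rfl⟩ | norm_num at h

theorem eq_and_eq_or_eq_and_eq_of_tensor_eq {l i₀ : ι} (hi₀ : i₀ ≠ l)
    (hx : ∀ i, x i * x i = 1) (hy : ∀ i, y i * y i = 1)
    (ha : ∀ i, a i * a i = 1) (hb : ∀ i, b i * b i = 1)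
    (hal : a l = 1) (hbl : b l = 1) (hab : ∀ i, i ≠ l → a i + b i = 0)
    (hT : ∀ i j k, x i * x j * x k + y i * y j * y k = a i * a j * a k + b i * b j * b k) :
    x = a ∧ y = b ∨ x = b ∧ y = a := by
  have hsum := add_eq_add_of_tensor_eq hx hy ha hb hT
  obtain ⟨hxl, hyl⟩ : x l = 1 ∧ y l = 1 :=
    eq_one_and_eq_one_of_add_eq_two (hx l) (hy l) (by rw [hsum, hal, hbl]; norm_num)
  have hba : ∀ i, i ≠ l → b i = -a i := fun i hi => by linear_combination hab i hi
  have hyx : ∀ i, i ≠ l → y i = -x i := fun i hi => by linear_combination hsum i + hab i hi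
  have hprod : ∀ i, i ≠ l → x i * x i₀ = a i * a i₀ := fun i hi => by
    have h := hT i i₀ l
    rw [hxl, hyl, hal, hbl, hyx i hi, hyx i₀ hi₀, hba i hi, hba i₀ hi₀] at h
    linear_combination h / 2
  set ε := x i₀ * a i₀
  have hε : ε * ε = 1 := by linear_combination x i₀ * x i₀ * ha i₀ + hx i₀
  have hxa : ∀ i, i ≠ l → x i = ε * a i := fun i hi => by
    linear_combination x i₀ * hprod i hi - x i * hx i₀
  have ext_off_l : ∀ f g : ι → ℝ, f l = g l → (∀ i, i ≠ l → f i = g i) → f = g :=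
    fun f g hl h => funext fun i => by
      by_cases hi : i = l
      · rw [hi, hl]
      · exact h i hi
  rcases mul_self_eq_one_iff.mp hε with h | h
  · exact Or.inl
      ⟨ext_off_l x a (hxl.trans hal.symm) fun i hi => by rw [hxa i hi, h, one_mul],
        ext_off_l y b (hyl.trans hbl.symm) fun i hi => by
          rw [hyx i hi, hxa i hi, h, hba i hi, one_mul]⟩
  · exact Or.inr
      ⟨ext_off_l x b (hxl.trans hbl.symm) fun i hi => by rw [hxa i hi, h, hba i hi, neg_one_mul],
        ext_off_l y a (hyl.trans hal.symm) fun i hi => by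
          rw [hyx i hi, hxa i hi, h, neg_one_mul, neg_neg]⟩

end SignVectors

/-- a, b ∈ {−1,1}^{n+1} (n ≥ 1) with a, b equal to 1 in the last
coordinate and a_i + b_i = 0 elsewhere. Then exactly 2 pairs (a', b') of {−1,1}-vectors
produce the same tensor T_{ijk} = a_i a_j a_k + b_i b_j b_k. -/
theorem two_decompositions (n : ℕ) (hn : 1 ≤ n) (a b : Fin (n + 1) → ℝ)
    (ha : ∀ i, a i = 1 ∨ a i = -1) (hb : ∀ i, b i = 1 ∨ b i = -1)
    (halast : a (Fin.last n) = 1) (hblast : b (Fin.last n) = 1)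
    (hab : ∀ i : Fin (n + 1), i ≠ Fin.last n → a i + b i = 0) :
    Nat.card {p : (Fin (n + 1) → ↥({-1, 1} : Finset ℝ))
        × (Fin (n + 1) → ↥({-1, 1} : Finset ℝ)) //
      ∀ i j k, (p.1 i : ℝ) * (p.1 j : ℝ) * (p.1 k : ℝ)
          + (p.2 i : ℝ) * (p.2 j : ℝ) * (p.2 k : ℝ)
        = a i * a j * a k + b i * b j * b k} = 2 := by
  have hsign : ∀ s : ↥({-1, 1} : Finset ℝ), (s : ℝ) * s = 1 := fun s =>
    mul_self_eq_one_iff.mpr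
      (Or.symm (by simpa only [Finset.mem_insert, Finset.mem_singleton] using s.2))
  let A : Fin (n + 1) → ↥({-1, 1} : Finset ℝ) := fun i =>
    ⟨a i, by simpa [or_comm] using ha i⟩
  let B : Fin (n + 1) → ↥({-1, 1} : Finset ℝ) := fun i =>
    ⟨b i, by simpa [or_comm] using hb i⟩
  let i₀ : Fin (n + 1) := Fin.castSucc ⟨0, hn⟩
  have hi₀ : i₀ ≠ Fin.last n := (Fin.castSucc_lt_last _).ne
  have hAB : (A, B) ≠ (B, A) := fun h => by
    have h₀ : a i₀ = b i₀ := congrArg (fun q => (q.1 i₀ : ℝ)) h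
    rcases ha i₀ with h₁ | h₁ <;> linarith [hab i₀ hi₀]
  refine Nat.card_subtype_eq_two hAB fun p => ⟨fun hT => ?_, ?_⟩
  · rcases eq_and_eq_or_eq_and_eq_of_tensor_eq hi₀
      (fun i => hsign (p.1 i)) (fun i => hsign (p.2 i))
      (fun i => mul_self_eq_one_iff.mpr (ha i)) (fun i => mul_self_eq_one_iff.mpr (hb i))
      halast hblast hab hT with ⟨h₁, h₂⟩ | ⟨h₁, h₂⟩
    · exact Or.inl (Prod.ext (Subtype.val_injective.comp_left h₁)
        (Subtype.val_injective.comp_left h₂))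
    · exact Or.inr (Prod.ext (Subtype.val_injective.comp_left h₁)
        (Subtype.val_injective.comp_left h₂))
  · rintro (rfl | rfl) i j k
    · rfl
    · exact add_comm _ _
end

section
/- Let N ≥ 3, R ≥ 2, n ≥ R, and 𝒳_1,…,𝒳_N finite subsets of ℝ. There is a constant Γ depending only on N, R, and the alphabets (not on n) such that: for every tensor T, the number of tuples (X_1,…,X_N) of full-column-rank matrices X_i ∈ 𝒳_i^{n×R} with T = Σ_{r=1}^R X_1(:,r) ∘ ⋯ ∘ X_N(:,r) is at most Γ. -/
open Matrix

lemma mulVec_inj_of_rank {n R : ℕ} (A : Matrix (Fin n) (Fin R) ℝ) (h : A.rank = R) :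
    ∀ v : Fin R → ℝ, A.mulVec v = 0 → v = 0 := by
  intro v hv
  have h1 := A.mulVecLin.finrank_range_add_finrank_ker
  rw [show Module.finrank ℝ (LinearMap.range A.mulVecLin) = A.rank from rfl, h] at h1
  simp [Module.finrank_pi] at h1
  exact (LinearMap.ker_eq_bot.mp h1) (by simpa [Matrix.mulVecLin] using hv)

lemma transpose_mulVec_surj {n R : ℕ} (A : Matrix (Fin n) (Fin R) ℝ) (h : A.rank = R)
    (w : Fin R → ℝ) : ∃ lam : Fin n → ℝ, Aᵀ.mulVec lam = w := by
  have ht : Aᵀ.rank = R := by rw [Matrix.rank_transpose, h]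
  have : LinearMap.range Aᵀ.mulVecLin = ⊤ := by
    apply Submodule.eq_top_of_finrank_eq
    rw [show Module.finrank ℝ (LinearMap.range Aᵀ.mulVecLin) = Aᵀ.rank from rfl, ht]
    simp [Module.finrank_pi]
  obtain ⟨lam, hlam⟩ := (LinearMap.range_eq_top.mp this) w
  exact ⟨lam, hlam⟩

lemma colspan_eq_fibspan {n N R : ℕ} (hN : 2 ≤ N)
    (M : Fin N → Matrix (Fin n) (Fin R) ℝ) (hrank : ∀ k, (M k).rank = R)
    (T : (Fin N → Fin n) → ℝ)
    (hT : T = fun t => ∑ r : Fin R, ∏ k, M k (t k) r) (i : Fin N) :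
    LinearMap.range (M i).mulVecLin =
      Submodule.span ℝ {f : Fin n → ℝ |
        ∃ t : Fin N → Fin n, f = fun j => T (Function.update t i j)} := by
  set c : (Fin N → Fin n) → Fin R → ℝ :=
    fun t r => ∏ k ∈ Finset.univ.erase i, M k (t k) r with hc
  have hfib : ∀ t : Fin N → Fin n,
      (fun j => T (Function.update t i j)) = (M i).mulVec (c t) := by
    intro t
    funext j
    simp only [hT, Matrix.mulVec, dotProduct, hc]
    refine Finset.sum_congr rfl (fun r _ => ?_)
    rw [← Finset.mul_prod_erase _ _ (Finset.mem_univ i), Function.update_self]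
    congr 1
    refine Finset.prod_congr rfl (fun k hk => ?_)
    rw [Function.update_of_ne (Finset.mem_erase.mp hk).1]
  apply le_antisymm
  · -- columns ⊆ fiber span
    rintro x ⟨v, rfl⟩
    rw [Matrix.mulVecLin_apply]
    have hcol : ∀ r : Fin R, (fun j => M i j r) ∈
        Submodule.span ℝ {f : Fin n → ℝ |
          ∃ t : Fin N → Fin n, f = fun j => T (Function.update t i j)} := by
      intro r
      have hnontriv : Nontrivial (Fin N) := by
        refine Fin.nontrivial_iff_two_le.mpr hN
      obtain ⟨k0, hk0⟩ := exists_ne i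
      have hnz : ∀ k : Fin N, ∃ jk : Fin n, M k jk r ≠ 0 := by
        intro k
        by_contra hcon
        push_neg at hcon
        have : (M k).mulVec (Pi.single r 1) = 0 := by
          funext j
          simp [Matrix.mulVec, dotProduct, Pi.single_apply, hcon j]
        have := mulVec_inj_of_rank (M k) (hrank k) _ this
        have := congrFun this r
        simp at this
      choose jv hjv using hnz
      set π : Fin R → ℝ :=
        fun r' => ∏ k ∈ (Finset.univ.erase i).erase k0, M k (jv k) r' with hπdef
      have hπ : π r ≠ 0 := Finset.prod_ne_zero_iff.mpr (fun k _ => hjv k)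
      obtain ⟨lam, hlam⟩ := transpose_mulVec_surj (M k0) (hrank k0) (Pi.single r (π r)⁻¹)
      have hclaim : (fun j => M i j r) =
          ∑ s : Fin n, lam s • (fun j => T (Function.update (Function.update jv k0 s) i j)) := by
        funext j
        have hcsplit : ∀ s : Fin n, ∀ r' : Fin R,
            c (Function.update jv k0 s) r' = M k0 s r' * π r' := by
          intro s r'
          show (∏ k ∈ Finset.univ.erase i, M k (Function.update jv k0 s k) r') = M k0 s r' * π r'
          have hk0mem : k0 ∈ Finset.univ.erase i := Finset.mem_erase.mpr ⟨hk0, Finset.mem_univ _⟩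
          rw [← Finset.mul_prod_erase _ _ hk0mem, Function.update_self]
          congr 1
          refine Finset.prod_congr rfl (fun k hk => ?_)
          rw [Function.update_of_ne (Finset.mem_erase.mp hk).1]
        have hrow : ∀ r' : Fin R, ∑ s : Fin n, M k0 s r' * lam s = (Pi.single r (π r)⁻¹ : Fin R → ℝ) r' := by
          intro r'
          have := congrFun hlam r'
          simpa [Matrix.mulVec, dotProduct, Matrix.transpose_apply] using this
        calc M i j r
            = ∑ r' : Fin R, M i j r' * π r' * (Pi.single r (π r)⁻¹ : Fin R → ℝ) r' := by
              rw [Finset.sum_eq_single r]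
              · rw [Pi.single_eq_same, mul_assoc, mul_inv_cancel₀ hπ, mul_one]
              · intro r' _ hr'
                rw [Pi.single_eq_of_ne hr', mul_zero]
              · intro h; exact absurd (Finset.mem_univ r) h
          _ = ∑ r' : Fin R, M i j r' * π r' * ∑ s : Fin n, M k0 s r' * lam s := by
              refine Finset.sum_congr rfl (fun r' _ => by rw [hrow])
          _ = ∑ r' : Fin R, ∑ s : Fin n, lam s * (M i j r' * (M k0 s r' * π r')) := by
              refine Finset.sum_congr rfl (fun r' _ => ?_)
              rw [Finset.mul_sum]
              refine Finset.sum_congr rfl (fun s _ => by ring)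
          _ = ∑ s : Fin n, ∑ r' : Fin R, lam s * (M i j r' * (M k0 s r' * π r')) :=
              Finset.sum_comm
          _ = (∑ s : Fin n, lam s •
                (fun j => T (Function.update (Function.update jv k0 s) i j))) j := by
              rw [Finset.sum_apply]
              refine Finset.sum_congr rfl (fun s _ => ?_)
              have := congrFun (hfib (Function.update jv k0 s)) j
              simp only [Pi.smul_apply, smul_eq_mul, this, Matrix.mulVec, dotProduct]
              rw [Finset.mul_sum]
              refine Finset.sum_congr rfl (fun r' _ => ?_)
              rw [hcsplit s r']
      rw [hclaim]
      exact Submodule.sum_mem _ (fun s _ =>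
        Submodule.smul_mem _ _ (Submodule.subset_span ⟨_, rfl⟩))
    have : (M i).mulVec v = ∑ r : Fin R, v r • (fun j => M i j r) := by
      funext j
      simp [Matrix.mulVec, dotProduct, mul_comm]
    rw [this]
    exact Submodule.sum_mem _ (fun r _ => Submodule.smul_mem _ _ (hcol r))
  · -- fiber span ⊆ columns
    rw [Submodule.span_le]
    rintro f ⟨t, rfl⟩
    rw [hfib t]
    exact ⟨c t, rfl⟩
lemma exists_finset_coords {n : ℕ} :
    ∀ (d : ℕ) (V : Submodule ℝ (Fin n → ℝ)), Module.finrank ℝ V ≤ d →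
      ∃ s : Finset (Fin n), s.card ≤ d ∧ ∀ v ∈ V, (∀ j ∈ s, v j = 0) → v = 0 := by
  intro d
  induction d with
  | zero =>
    intro V hV
    refine ⟨∅, le_refl _, fun v hv _ => ?_⟩
    have : V = ⊥ := Submodule.finrank_eq_zero.mp (Nat.le_zero.mp hV)
    simpa [this] using hv
  | succ d ih =>
    intro V hV
    by_cases hbot : V = ⊥
    · exact ⟨∅, Nat.zero_le _, fun v hv _ => by simpa [hbot] using hv⟩
    · obtain ⟨v0, hv0V, hv0⟩ := Submodule.exists_mem_ne_zero_of_ne_bot hbot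
      obtain ⟨j, hj⟩ : ∃ j, v0 j ≠ 0 := by
        by_contra h; push_neg at h; exact hv0 (funext h)
      set V' := V ⊓ LinearMap.ker (LinearMap.proj (R := ℝ) (φ := fun _ : Fin n => ℝ) j) with hV'
      have hlt : V' < V := by
        refine lt_of_le_of_ne inf_le_left (fun h => ?_)
        have : v0 ∈ V' := h ▸ hv0V
        exact hj this.2
      have : Module.finrank ℝ V' < Module.finrank ℝ V := Submodule.finrank_lt_finrank_of_lt hlt
      obtain ⟨s', hs'c, hs'⟩ := ih V' (by omega)
      refine ⟨insert j s', le_trans (Finset.card_insert_le _ _) (by omega), ?_⟩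
      intro v hv hz
      refine hs' v ⟨hv, ?_⟩ (fun k hk => hz k (Finset.mem_insert_of_mem hk))
      exact hz j (Finset.mem_insert_self _ _)

lemma exists_coords {n R : ℕ} (hn : 0 < n) (V : Submodule ℝ (Fin n → ℝ))
    (hV : Module.finrank ℝ V ≤ R) :
    ∃ s : Fin R → Fin n, ∀ v ∈ V, (∀ k, v (s k) = 0) → v = 0 := by
  obtain ⟨S, hSc, hS⟩ := exists_finset_coords R V hV
  have e := S.equivFin
  refine ⟨fun k => if h : (k : ℕ) < S.card then (e.symm ⟨k, h⟩ : Fin n) else ⟨0, hn⟩, ?_⟩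
  intro v hv hz
  refine hS v hv (fun j hj => ?_)
  have hlt : ((e ⟨j, hj⟩ : Fin S.card) : ℕ) < S.card := (e ⟨j, hj⟩).2
  have := hz ⟨(e ⟨j, hj⟩ : Fin S.card), lt_of_lt_of_le hlt hSc⟩
  simp only [dif_pos hlt] at this
  rwa [show (⟨((e ⟨j, hj⟩ : Fin S.card) : ℕ), hlt⟩ : Fin S.card) = e ⟨j, hj⟩ from Fin.ext rfl,
    Equiv.symm_apply_apply] at this

/-- for N ≥ 3, R ≥ 2, and finite alphabets 𝒳_i ⊂ ℝ, there is a constant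
Γ (independent of n) bounding, for every tensor T, the number of tuples of
full-column-rank factor matrices with entries in the alphabets whose CP decomposition
equals T. -/
theorem cp_factor_count_bounded (N R : ℕ) (hN : 3 ≤ N) (hR : 2 ≤ R)
    (𝒳 : Fin N → Finset ℝ) :
    ∃ Γ : ℕ, ∀ n : ℕ, R ≤ n → ∀ T : (Fin N → Fin n) → ℝ,
      Nat.card {X : (i : Fin N) → Fin n → Fin R → ↥(𝒳 i) //
        (∀ i, (Matrix.of fun j r => ((X i j r : ℝ))).rank = R) ∧
        T = fun t : Fin N → Fin n => ∑ r : Fin R, ∏ i, ((X i (t i) r : ℝ))} ≤ Γ := by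
  refine ⟨Nat.card ((i : Fin N) → Fin R → Fin R → ↥(𝒳 i)), ?_⟩
  intro n hn T
  set Sol := {X : (i : Fin N) → Fin n → Fin R → ↥(𝒳 i) //
        (∀ i, (Matrix.of fun j r => ((X i j r : ℝ))).rank = R) ∧
        T = fun t : Fin N → Fin n => ∑ r : Fin R, ∏ i, ((X i (t i) r : ℝ))} with hSol
  rcases isEmpty_or_nonempty Sol with hemp | hne
  · rw [Nat.card_of_isEmpty]; exact Nat.zero_le _
  · obtain ⟨X0⟩ := hne
    have hn0 : 0 < n := by omega
    have hN2 : 2 ≤ N := by omega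
    -- matrices of a solution
    set Mat : Sol → Fin N → Matrix (Fin n) (Fin R) ℝ :=
      fun X k => Matrix.of fun j r => ((X.1 k j r : ℝ)) with hMat
    have hspan : ∀ (X : Sol) (i : Fin N),
        LinearMap.range (Mat X i).mulVecLin =
          Submodule.span ℝ {f : Fin n → ℝ |
            ∃ t : Fin N → Fin n, f = fun j => T (Function.update t i j)} := by
      intro X i
      exact colspan_eq_fibspan hN2 (Mat X) X.2.1 T X.2.2 i
    set V : Fin N → Submodule ℝ (Fin n → ℝ) :=
      fun i => LinearMap.range (Mat X0 i).mulVecLin with hV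
    have hVfin : ∀ i, Module.finrank ℝ (V i) ≤ R := by
      intro i
      have : Module.finrank ℝ (V i) = (Mat X0 i).rank := rfl
      rw [this, X0.2.1 i]
    choose s hs using fun i => exists_coords (R := R) hn0 (V i) (hVfin i)
    have hcolmem : ∀ (X : Sol) (i : Fin N) (r : Fin R),
        (fun j => ((X.1 i j r : ℝ))) ∈ V i := by
      intro X i r
      show _ ∈ LinearMap.range (Mat X0 i).mulVecLin
      rw [hspan X0 i, ← hspan X i]
      refine ⟨Pi.single r 1, ?_⟩
      funext j
      simp [Matrix.mulVecLin_apply, Matrix.mulVec, dotProduct, Pi.single_apply, hMat]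
    have hinj : Function.Injective
        (fun (X : Sol) => fun (i : Fin N) (k : Fin R) (r : Fin R) => X.1 i (s i k) r) := by
      intro X Y h
      apply Subtype.ext
      funext i j r
      have hvmem : (fun j => ((X.1 i j r : ℝ))) - (fun j => ((Y.1 i j r : ℝ))) ∈ V i :=
        Submodule.sub_mem _ (hcolmem X i r) (hcolmem Y i r)
      have hz : ∀ k : Fin R,
          ((fun j => ((X.1 i j r : ℝ))) - (fun j => ((Y.1 i j r : ℝ)))) (s i k) = 0 := by
        intro k
        have := congrFun (congrFun (congrFun h i) k) r
        simp only [Pi.sub_apply]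
        rw [show ((X.1 i (s i k) r : ℝ)) = ((Y.1 i (s i k) r : ℝ)) from congrArg _ this]
        ring
      have := hs i _ hvmem hz
      have := congrFun this j
      simp only [Pi.sub_apply, Pi.zero_apply, sub_eq_zero] at this
      exact Subtype.coe_injective this
    exact Nat.card_le_card_of_injective _ hinj
end
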